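/- Let (M, →) be a transition system. The set Y = {(P, Q) | every complete execution path τ of (M, →) with hd(τ) ∈ P satisfies (τ, (P, Q)) ∈ ν EPSRP̂} is a post-fixed point of the operator DVP̂, i.e. Y ⊆ DVP̂(Y); consequently Y ⊆ ν DVP̂. -/

import Mathlib

/-!
If every complete execution path from `P` reaches `Q` in the sense of `ν EPSRP̂`, then either
`P ⊆ Q`, or `P \ Q` is runnable — a state of `P \ Q` without successor would be a one-state
path that never reaches `Q` — and every complete path from `∂(P \ Q)` satisfies `∂(P \ Q) ⇒ Q`,
because prefixing it with its predecessor in `P \ Q` gives a path from `P` that must take a step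
before reaching `Q`, after which its tail satisfies `∂(P) ⇒ Q` and hence the stronger
`∂(P \ Q) ⇒ Q`. So the set of such `(P, Q)` is post-fixed for `DVP̂`, and coinduction gives the rest.
-/

variable {M : Type*}

/-- `P` is runnable: `P ≠ ∅` and every state in `P` has a successor. -/
def Runnable (R : M → M → Prop) (P : Set M) : Prop :=
  P ≠ ∅ ∧ ∀ γ ∈ P, ∃ γ', R γ γ'

/-- The derivative `∂(P)` of a state predicate `P`. -/
def derivS (R : M → M → Prop) (P : Set M) : Set M :=
  {γ' | ∃ γ ∈ P, R γ γ'}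

/-- The monotone operator `DVP̂` on sets of reachability predicates. -/
def DVPhat (R : M → M → Prop) : Set (Set M × Set M) →o Set (Set M × Set M) where
  toFun X := {pq | pq.1 ⊆ pq.2 ∨
      (Runnable R (pq.1 \ pq.2) ∧ (derivS R (pq.1 \ pq.2), pq.2) ∈ X)}
  monotone' := by
    intro X Y hXY pq hpq
    rcases hpq with h | ⟨h1, h2⟩
    · exact Or.inl h
    · exact Or.inr ⟨h1, hXY h2⟩

/-- `(M, →) ⊨∀ P ⇒ Q` : the reachability predicate `P ⇒ Q` is demonically valid,
i.e. `(P, Q) ∈ ν DVP̂`. -/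
def DemValid (R : M → M → Prop) (P Q : Set M) : Prop :=
  (P, Q) ∈ OrderHom.gfp (DVPhat R)

/-- A complete execution path of the transition system `(M, R)`: a nonempty finite or
infinite sequence of states such that consecutive states are related by `R` and, if the
sequence is finite, its last state is irreducible. -/
structure ExecPath (M : Type*) (R : M → M → Prop) where
  seq : ℕ → Option M
  nonempty : (seq 0).isSome
  closed : ∀ n, (seq (n + 1)).isSome → (seq n).isSome
  step : ∀ n a b, seq n = some a → seq (n + 1) = some b → R a b
  complete : ∀ n a, seq n = some a → seq (n + 1) = none → ∀ b, ¬ R a b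

/-- The first state of an execution path. -/
def ExecPath.hd {R : M → M → Prop} (τ : ExecPath M R) : M :=
  (τ.seq 0).get τ.nonempty

/-- `τ.IsCons γ τ'` means `τ = γ·τ'`: `τ` is the execution path with first state `γ`
followed by the execution path `τ'`. -/
def ExecPath.IsCons {R : M → M → Prop} (τ : ExecPath M R) (γ : M) (τ' : ExecPath M R) : Prop :=
  τ.seq 0 = some γ ∧ ∀ n, τ.seq (n + 1) = τ'.seq n

/-- The monotone operator `EPSRP̂` on sets of pairs (execution path, reachability predicate). -/
def EPSRPhat (R : M → M → Prop) :
    Set (ExecPath M R × (Set M × Set M)) →o Set (ExecPath M R × (Set M × Set M)) where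
  toFun Y := {p | p.1.hd ∈ p.2.1 ∩ p.2.2 ∨
      ∃ γ₀ τ', p.1.IsCons γ₀ τ' ∧ γ₀ ∈ p.2.1 ∧ R γ₀ τ'.hd ∧
        (τ', (derivS R p.2.1, p.2.2)) ∈ Y}
  monotone' := by
    intro X Y hXY p hp
    rcases hp with h | ⟨γ₀, τ', h1, h2, h3, h4⟩
    · exact Or.inl h
    · exact Or.inr ⟨γ₀, τ', h1, h2, h3, hXY h4⟩

/-- `τ ⊨∀ P ⇒ Q` : the execution path `τ` satisfies the reachability predicate `P ⇒ Q`,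
i.e. `(τ, (P, Q)) ∈ ν EPSRP̂`. -/
def PathSat {M : Type*} (R : M → M → Prop) (τ : ExecPath M R) (P Q : Set M) : Prop :=
  (τ, (P, Q)) ∈ OrderHom.gfp (EPSRPhat R)

variable {R : M → M → Prop}

namespace ExecPath

theorem ext_seq {τ τ' : ExecPath M R} (h : τ.seq = τ'.seq) : τ = τ' := by
  cases τ; cases τ'; subst h; rfl

theorem hd_eq_of_seq_zero {τ : ExecPath M R} {γ : M} (h : τ.seq 0 = some γ) : τ.hd = γ := by
  simp [hd, h]

theorem seq_zero (τ : ExecPath M R) : τ.seq 0 = some τ.hd := by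
  simp [hd]

def single (γ : M) (hγ : ∀ γ', ¬ R γ γ') : ExecPath M R where
  seq n := if n = 0 then some γ else none
  nonempty := by simp
  closed n h := by simp at h
  step n a b _ hb := by simp at hb
  complete n a ha _ := by
    obtain ⟨rfl, rfl⟩ : n = 0 ∧ γ = a := by simpa using ha
    exact hγ

@[simp]
theorem hd_single (γ : M) (hγ : ∀ γ', ¬ R γ γ') : (single γ hγ).hd = γ :=
  hd_eq_of_seq_zero (by simp [single])

theorem not_isCons_single (γ : M) (hγ : ∀ γ', ¬ R γ γ') (γ₀ : M) (τ : ExecPath M R) :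
    ¬ (single γ hγ).IsCons γ₀ τ := by
  rintro ⟨-, htail⟩
  have := τ.nonempty
  rw [← htail 0] at this
  simp [single] at this

def cons (γ : M) (τ : ExecPath M R) (hγ : R γ τ.hd) : ExecPath M R where
  seq
    | 0 => some γ
    | n + 1 => τ.seq n
  nonempty := rfl
  closed
    | 0, _ => rfl
    | n + 1, h => τ.closed n h
  step
    | 0, a, b, ha, hb => by
      obtain rfl : γ = a := Option.some_injective _ ha
      obtain rfl : τ.hd = b := Option.some_injective _ (τ.seq_zero.symm.trans hb)
      exact hγ
    | n + 1, a, b, ha, hb => τ.step n a b ha hb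
  complete
    | 0, _, _, hnone => by
      have := τ.nonempty
      simp_all
    | n + 1, a, ha, hnone => τ.complete n a ha hnone

@[simp]
theorem hd_cons (γ : M) (τ : ExecPath M R) (hγ : R γ τ.hd) : (cons γ τ hγ).hd = γ :=
  hd_eq_of_seq_zero rfl

theorem IsCons.eq_of_cons {γ γ₀ : M} {τ σ : ExecPath M R} {hγ : R γ τ.hd}
    (h : (cons γ τ hγ).IsCons γ₀ σ) : σ = τ :=
  ext_seq (funext fun n => (h.2 n).symm)

end ExecPath

theorem derivS_mono {P P' : Set M} (h : P ⊆ P') : derivS R P ⊆ derivS R P' := by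
  rintro x ⟨γ, hγ, hR⟩
  exact ⟨γ, h hγ, hR⟩

theorem pathSat_iff {τ : ExecPath M R} {P Q : Set M} :
    PathSat R τ P Q ↔ τ.hd ∈ P ∩ Q ∨
      ∃ γ₀ τ', τ.IsCons γ₀ τ' ∧ γ₀ ∈ P ∧ R γ₀ τ'.hd ∧ PathSat R τ' (derivS R P) Q := by
  unfold PathSat
  nth_rw 1 [← (EPSRPhat R).map_gfp]
  rfl

theorem PathSat.anti_left {τ : ExecPath M R} {P P' Q : Set M} (hsat : PathSat R τ P Q)
    (hhd : τ.hd ∈ P') (hsub : P' ⊆ P) : PathSat R τ P' Q := by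
  let Z : Set (ExecPath M R × (Set M × Set M)) :=
    {p | ∃ P₀, PathSat R p.1 P₀ p.2.2 ∧ p.1.hd ∈ p.2.1 ∧ p.2.1 ⊆ P₀}
  have hpost : Z ≤ EPSRPhat R Z := by
    rintro ⟨σ, P'', Q''⟩ ⟨P₀, hsat₀, hhd₀, hsub₀⟩
    rcases pathSat_iff.mp hsat₀ with h | ⟨γ₀, σ', hcons, -, hstep, hsat'⟩
    · exact Or.inl ⟨hhd₀, h.2⟩
    · obtain rfl : σ.hd = γ₀ := ExecPath.hd_eq_of_seq_zero hcons.1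
      exact Or.inr ⟨_, σ', hcons, hhd₀, hstep,
        derivS R P₀, hsat', ⟨_, hhd₀, hstep⟩, derivS_mono hsub₀⟩
  exact OrderHom.le_gfp (EPSRPhat R) hpost ⟨P, hsat, hhd, hsub⟩

theorem PathSat.mem_of_single {γ : M} {hγ : ∀ γ', ¬ R γ γ'} {P Q : Set M}
    (hsat : PathSat R (ExecPath.single γ hγ) P Q) : γ ∈ Q := by
  rcases pathSat_iff.mp hsat with h | ⟨γ₀, τ', hcons, -⟩
  · simpa using h.2
  · exact absurd hcons (ExecPath.not_isCons_single γ hγ γ₀ τ')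

theorem PathSat.of_cons {γ : M} {τ : ExecPath M R} {hγ : R γ τ.hd} {P Q : Set M}
    (hsat : PathSat R (ExecPath.cons γ τ hγ) P Q) (hγQ : γ ∉ Q) :
    PathSat R τ (derivS R P) Q := by
  rcases pathSat_iff.mp hsat with h | ⟨γ₀, τ', hcons, -, -, hsat'⟩
  · exact absurd (by simpa using h.2) hγQ
  · rwa [hcons.eq_of_cons] at hsat'

def AllPathsSat (R : M → M → Prop) (P Q : Set M) : Prop :=
  ∀ τ : ExecPath M R, τ.hd ∈ P → PathSat R τ P Q

theorem AllPathsSat.runnable_diff {P Q : Set M} (h : AllPathsSat R P Q) (hPQ : ¬ P ⊆ Q) :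
    Runnable R (P \ Q) := by
  refine ⟨(Set.sdiff_nonempty.mpr hPQ).ne_empty, fun γ ⟨hγP, hγQ⟩ => ?_⟩
  by_contra! hγ
  exact hγQ (h (.single γ hγ) (by simpa using hγP)).mem_of_single

theorem AllPathsSat.derivS_diff {P Q : Set M} (h : AllPathsSat R P Q) :
    AllPathsSat R (derivS R (P \ Q)) Q := by
  rintro τ hhd
  obtain ⟨γ, ⟨hγP, hγQ⟩, hγ⟩ := id hhd
  have hsat := (h (.cons γ τ hγ) (by simpa using hγP)).of_cons hγQ
  exact hsat.anti_left hhd (derivS_mono Set.sdiff_subset)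

theorem allPathsSat_subset_DVPhat :
    {pq : Set M × Set M | AllPathsSat R pq.1 pq.2} ⊆
      DVPhat R {pq | AllPathsSat R pq.1 pq.2} := by
  rintro ⟨P, Q⟩ h
  by_cases hPQ : P ⊆ Q
  · exact Or.inl hPQ
  · exact Or.inr ⟨h.runnable_diff hPQ, h.derivS_diff⟩

/-- The set of reachability predicates `(P, Q)` satisfied by every complete execution
path starting in `P` is a post-fixed point of `DVP̂`, hence included in `ν DVP̂`. -/
theorem pathSat_postFixed (M : Type*) (R : M → M → Prop)
    (Y : Set (Set M × Set M))
    (hY : Y = {pq | ∀ τ : ExecPath M R, τ.hd ∈ pq.1 →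
        (τ, (pq.1, pq.2)) ∈ OrderHom.gfp (EPSRPhat R)}) :
    Y ⊆ DVPhat R Y ∧ Y ⊆ OrderHom.gfp (DVPhat R) := by
  subst hY
  exact ⟨allPathsSat_subset_DVPhat, OrderHom.le_gfp _ allPathsSat_subset_DVPhat⟩
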